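/- For ε ∈ ℝ, define g_ε : ℝ² → ℝ² by g_ε(x,y) = (2x + y + ε·sin(2πx), x + y + ε·sin(2πx)). Then there exist ε₀ > 0 and a map p : ℝ → ℝ² that is continuously differentiable on the interval (−ε₀, ε₀), such that p(0) = (1/5, 2/5) and for every ε ∈ (−ε₀, ε₀), g_ε(g_ε(p(ε))) = p(ε) + (2, 1). -/

import Mathlib

/-! At `ε = 0` the equation `g_ε (g_ε q) - q = (2, 1)` is linear in `q`, with linear part
`A² - 1`; it is invertible because `A` is hyperbolic (`det (A² - 1) = -5`). The implicit function
theorem applied to `(ε, q) ↦ g_ε (g_ε q) - q` at `(0, (1/5, 2/5))` then continues the solution. -/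

/-- The base torus map `g_ε(x,y) = (2x + y + ε sin(2πx), x + y + ε sin(2πx))` lifted to ℝ². -/
noncomputable def gmap (ε : ℝ) (q : ℝ × ℝ) : ℝ × ℝ :=
  (2 * q.1 + q.2 + ε * Real.sin (2 * Real.pi * q.1),
   q.1 + q.2 + ε * Real.sin (2 * Real.pi * q.1))

open Function Set Filter Topology

theorem ContinuousLinearMap.IsInvertible.of_injective {𝕜 E : Type*} [NontriviallyNormedField 𝕜]
    [CompleteSpace 𝕜] [NormedAddCommGroup E] [NormedSpace 𝕜 E] [FiniteDimensional 𝕜 E]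
    {f : E →L[𝕜] E} (hf : Injective f) : f.IsInvertible :=
  ⟨(LinearEquiv.ofInjectiveEndo f.toLinearMap hf).toContinuousLinearEquiv, rfl⟩

theorem fderiv_comp_inr {𝕜 E₁ E₂ F : Type*} [NontriviallyNormedField 𝕜]
    [NormedAddCommGroup E₁] [NormedSpace 𝕜 E₁] [NormedAddCommGroup E₂] [NormedSpace 𝕜 E₂]
    [NormedAddCommGroup F] [NormedSpace 𝕜 F] {f : E₁ × E₂ → F} {u : E₁ × E₂}
    (hf : DifferentiableAt 𝕜 f u) :
    fderiv 𝕜 f u ∘L .inr 𝕜 E₁ E₂ = fderiv 𝕜 (fun y => f (u.1, y)) u.2 :=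
  (hf.hasFDerivAt.comp u.2 (hasFDerivAt_prodMk_right u.1 u.2)).fderiv.symm

theorem Real.exists_pos_forall_mem_Ioo_of_eventually_nhds_zero {P : ℝ → Prop}
    (h : ∀ᶠ x in 𝓝 0, P x) : ∃ ε₀ > 0, ∀ x ∈ Ioo (-ε₀) ε₀, P x := by
  obtain ⟨ε₀, hε₀, hP⟩ := Metric.eventually_nhds_iff_ball.1 h
  exact ⟨ε₀, hε₀, fun x hx => hP x (by simpa [Real.ball_eq_Ioo] using hx)⟩

noncomputable def catMap : ℝ × ℝ →L[ℝ] ℝ × ℝ :=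
  open ContinuousLinearMap in ((2 : ℝ) • fst ℝ ℝ ℝ + snd ℝ ℝ ℝ).prod (fst ℝ ℝ ℝ + snd ℝ ℝ ℝ)

theorem gmap_zero : gmap 0 = catMap := by
  ext q <;> simp [gmap, catMap]

theorem injective_catMap_comp_catMap_sub_id :
    Injective ⇑(catMap ∘L catMap - ContinuousLinearMap.id ℝ (ℝ × ℝ)) := by
  rw [injective_iff_map_eq_zero]
  rintro ⟨x, y⟩ h
  simp only [catMap, sub_apply, ContinuousLinearMap.comp_apply,
    ContinuousLinearMap.prod_apply, add_apply, smul_apply,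
    ContinuousLinearMap.coe_fst', ContinuousLinearMap.coe_snd', ContinuousLinearMap.id_apply,
    smul_eq_mul, Prod.mk_sub_mk, Prod.mk_eq_zero] at h
  obtain ⟨h₁, h₂⟩ := h
  ext <;> simp only [Prod.fst_zero, Prod.snd_zero] <;> linarith

noncomputable def periodTwoDefect (z : ℝ × (ℝ × ℝ)) : ℝ × ℝ :=
  gmap z.1 (gmap z.1 z.2) - z.2

theorem contDiff_periodTwoDefect {n : WithTop ℕ∞} : ContDiff ℝ n periodTwoDefect := by
  unfold periodTwoDefect gmap
  fun_prop

theorem periodTwoDefect_zero :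
    (fun q => periodTwoDefect (0, q)) = ⇑(catMap ∘L catMap - ContinuousLinearMap.id ℝ (ℝ × ℝ)) := by
  ext q <;> simp [periodTwoDefect, gmap_zero]

/-- a C¹ family of 2-periodic points of `g_ε` through `(1/5, 2/5)`. -/
theorem stmt_13 :
    ∃ ε₀ > (0 : ℝ), ∃ p : ℝ → ℝ × ℝ,
      ContDiffOn ℝ 1 p (Set.Ioo (-ε₀) ε₀) ∧
      p 0 = (1 / 5, 2 / 5) ∧
      ∀ ε ∈ Set.Ioo (-ε₀) ε₀, gmap ε (gmap ε (p ε)) = p ε + (2, 1) := by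
  set u : ℝ × (ℝ × ℝ) := (0, (1 / 5, 2 / 5))
  have hf : ContDiffAt ℝ 1 periodTwoDefect u := contDiff_periodTwoDefect.contDiffAt
  have hinv : (fderiv ℝ periodTwoDefect u ∘L .inr ℝ ℝ (ℝ × ℝ)).IsInvertible := by
    rw [fderiv_comp_inr (hf.differentiableAt one_ne_zero), periodTwoDefect_zero,
      ContinuousLinearMap.fderiv]
    exact .of_injective injective_catMap_comp_catMap_sub_id
  set p := hf.implicitFunction one_ne_zero hinv
  have hu : periodTwoDefect u = (2, 1) := by
    norm_num [u, periodTwoDefect, gmap_zero, catMap]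
  obtain ⟨ε₀, hε₀, hp⟩ := Real.exists_pos_forall_mem_Ioo_of_eventually_nhds_zero
    (((hf.contDiffAt_implicitFunction one_ne_zero hinv).eventually (by simp)).and
      (hf.eventually_apply_implicitFunction one_ne_zero hinv))
  refine ⟨ε₀, hε₀, p, fun ε hε => (hp ε hε).1.contDiffWithinAt,
    hf.implicitFunction_apply_self one_ne_zero hinv, fun ε hε => ?_⟩
  have h := (hp ε hε).2
  rw [hu, periodTwoDefect, sub_eq_iff_eq_add] at h
  rw [h, add_comm]
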